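/- The Hilbert metric on a nonempty bounded open convex set K ⊂ ℝⁿ satisfies the triangle inequality: d_K(x,z) ≤ d_K(x,y) + d_K(y,z) for all x, y, z ∈ K. -/
import Mathlib


open scoped Classical

/-- The Hilbert distance of a set `K ⊆ ℝⁿ` at `x, y`: parametrizing the line through
`x, y` as `t ↦ x + t•(y−x)` (so `x` at `t = 0`, `y` at `t = 1`), the boundary points
are `a` at `S = sInf {t | x + t•(y−x) ∈ K}` and `b` at `T = sSup {t | x + t•(y−x) ∈ K}`,
and `d_K(x,y) = (1/2)·log((|y−a|/|x−a|)·(|x−b|/|y−b|))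
             = (1/2)·log(((1−S)/(−S))·(T/(T−1)))`. -/
noncomputable def hilbertDist {n : ℕ} (K : Set (EuclideanSpace ℝ (Fin n)))
    (x y : EuclideanSpace ℝ (Fin n)) : ℝ :=
  if x = y then 0
  else
    (1 / 2) * Real.log
      (((1 - sInf {t : ℝ | x + t • (y - x) ∈ K}) / (0 - sInf {t : ℝ | x + t • (y - x) ∈ K})) *
        (sSup {t : ℝ | x + t • (y - x) ∈ K} / (sSup {t : ℝ | x + t • (y - x) ∈ K} - 1)))

namespace HilbertAux

variable {n : ℕ} {K : Set (EuclideanSpace ℝ (Fin n))}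

lemma mem_zero {x y : EuclideanSpace ℝ (Fin n)} (hx : x ∈ K) :
    (0:ℝ) ∈ {t : ℝ | x + t • (y - x) ∈ K} := by
  simp only [Set.mem_setOf_eq, zero_smul, add_zero]; exact hx

lemma mem_one {x y : EuclideanSpace ℝ (Fin n)} (hy : y ∈ K) :
    (1:ℝ) ∈ {t : ℝ | x + t • (y - x) ∈ K} := by
  simp only [Set.mem_setOf_eq, one_smul]
  have h : x + (y - x) = y := by abel
  rw [h]; exact hy

lemma isOpen_seg (hop : IsOpen K) (x y : EuclideanSpace ℝ (Fin n)) :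
    IsOpen {t : ℝ | x + t • (y - x) ∈ K} :=
  hop.preimage (by fun_prop)

lemma convex_seg (hcv : Convex ℝ K) (x y : EuclideanSpace ℝ (Fin n)) :
    Convex ℝ {t : ℝ | x + t • (y - x) ∈ K} := by
  intro s hs t ht a b ha hb hab
  have key : x + (a*s + b*t) • (y - x) = a • (x + s • (y-x)) + b • (x + t • (y-x)) := by
    linear_combination (norm := module) (-1:ℝ) • hab • x
  show x + (a • s + b • t) • (y - x) ∈ K
  rw [smul_eq_mul, smul_eq_mul, key]
  exact hcv hs ht ha hb hab

lemma bddAbove_seg (hbd : Bornology.IsBounded K) {x y : EuclideanSpace ℝ (Fin n)}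
    (hxy : x ≠ y) : BddAbove {t : ℝ | x + t • (y - x) ∈ K} := by
  obtain ⟨C, hC⟩ := isBounded_iff_forall_norm_le.1 hbd
  refine ⟨(C + ‖x‖) / ‖y - x‖, fun t ht => ?_⟩
  have hv : 0 < ‖y - x‖ := norm_pos_iff.2 (sub_ne_zero.2 (Ne.symm hxy))
  have h1 : ‖t • (y - x)‖ ≤ C + ‖x‖ := by
    have h2 := hC _ ht
    have h3 : t • (y - x) = (x + t • (y - x)) - x := by abel
    rw [h3]
    calc ‖x + t • (y-x) - x‖ ≤ ‖x + t • (y-x)‖ + ‖x‖ := norm_sub_le _ _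
    _ ≤ C + ‖x‖ := by linarith
  rw [norm_smul, Real.norm_eq_abs] at h1
  rw [le_div_iff₀ hv]
  exact le_trans (mul_le_mul_of_nonneg_right (le_abs_self t) hv.le) h1

lemma bddBelow_seg (hbd : Bornology.IsBounded K) {x y : EuclideanSpace ℝ (Fin n)}
    (hxy : x ≠ y) : BddBelow {t : ℝ | x + t • (y - x) ∈ K} := by
  obtain ⟨C, hC⟩ := isBounded_iff_forall_norm_le.1 hbd
  refine ⟨-((C + ‖x‖) / ‖y - x‖), fun t ht => ?_⟩
  have hv : 0 < ‖y - x‖ := norm_pos_iff.2 (sub_ne_zero.2 (Ne.symm hxy))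
  have h1 : ‖t • (y - x)‖ ≤ C + ‖x‖ := by
    have h2 := hC _ ht
    have h3 : t • (y - x) = (x + t • (y - x)) - x := by abel
    rw [h3]
    calc ‖x + t • (y-x) - x‖ ≤ ‖x + t • (y-x)‖ + ‖x‖ := norm_sub_le _ _
    _ ≤ C + ‖x‖ := by linarith
  rw [norm_smul, Real.norm_eq_abs] at h1
  have h4 : -t * ‖y - x‖ ≤ C + ‖x‖ :=
    le_trans (mul_le_mul_of_nonneg_right (neg_le_abs t) hv.le) h1
  have h5 := (le_div_iff₀ hv).2 h4
  linarith

lemma one_lt_sSup (hbd : Bornology.IsBounded K) (hop : IsOpen K)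
    {x y : EuclideanSpace ℝ (Fin n)} (hx : x ∈ K) (hy : y ∈ K) (hxy : x ≠ y) :
    1 < sSup {t : ℝ | x + t • (y - x) ∈ K} := by
  obtain ⟨ε, hε, hball⟩ := Metric.isOpen_iff.1 (isOpen_seg hop x y) 1 (mem_one hy)
  have h2 : 1 + ε/2 ∈ {t : ℝ | x + t • (y - x) ∈ K} := by
    apply hball
    rw [Metric.mem_ball, Real.dist_eq]
    rw [show (1 + ε/2) - 1 = ε/2 by ring, abs_of_pos (by linarith)]
    linarith
  have := le_csSup (bddAbove_seg hbd hxy) h2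
  linarith

lemma mem_seg_of_lt (hcv : Convex ℝ K) {x y : EuclideanSpace ℝ (Fin n)}
    (hx : x ∈ K) {t : ℝ} (h0 : 0 ≤ t)
    (ht : t < sSup {t : ℝ | x + t • (y - x) ∈ K}) :
    x + t • (y - x) ∈ K := by
  obtain ⟨t', ht', htt'⟩ := exists_lt_of_lt_csSup ⟨0, mem_zero hx⟩ ht
  exact (convex_seg hcv x y).ordConnected.out (mem_zero hx) ht' ⟨h0, htt'.le⟩

lemma sSup_notMem (hbd : Bornology.IsBounded K) (hop : IsOpen K)
    {x y : EuclideanSpace ℝ (Fin n)} (hxy : x ≠ y) :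
    x + (sSup {t : ℝ | x + t • (y - x) ∈ K}) • (y - x) ∉ K := by
  intro h
  obtain ⟨ε, hε, hball⟩ := Metric.isOpen_iff.1 (isOpen_seg hop x y)
    (sSup {t : ℝ | x + t • (y - x) ∈ K}) h
  have h2 : sSup {t : ℝ | x + t • (y - x) ∈ K} + ε/2 ∈ {t : ℝ | x + t • (y - x) ∈ K} := by
    apply hball
    rw [Metric.mem_ball, Real.dist_eq]
    rw [show (sSup {t : ℝ | x + t • (y - x) ∈ K} + ε/2) - sSup {t : ℝ | x + t • (y - x) ∈ K}
        = ε/2 by ring, abs_of_pos (by linarith)]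
    linarith
  have := le_csSup (bddAbove_seg hbd hxy) h2
  linarith

lemma funk_bound (hbd : Bornology.IsBounded K) (hop : IsOpen K) (hcv : Convex ℝ K)
    {x y : EuclideanSpace ℝ (Fin n)} (hx : x ∈ K) (hy : y ∈ K) (hxy : x ≠ y)
    (f : EuclideanSpace ℝ (Fin n) →L[ℝ] ℝ) (c : ℝ) (hf : ∀ w ∈ K, f w < c) :
    (c - f x) * (sSup {t : ℝ | x + t • (y - x) ∈ K} - 1)
      ≤ sSup {t : ℝ | x + t • (y - x) ∈ K} * (c - f y) := by
  set T := sSup {t : ℝ | x + t • (y - x) ∈ K} with hTd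
  have hT1 : 1 < T := one_lt_sSup hbd hop hx hy hxy
  have hfx := hf x hx
  have hfy := hf y hy
  have key : 0 ≤ (c - f x) + T * (f x - f y) := by
    by_contra hneg
    push_neg at hneg
    have hd : f x - f y < 0 := by
      by_contra h
      push_neg at h
      have : 0 ≤ T * (f x - f y) := mul_nonneg (by linarith) h
      linarith
    have hd' : 0 < f y - f x := by linarith
    set t0 := (c - f x) / (f y - f x) with ht0
    have h1t0 : 0 ≤ t0 := div_nonneg (by linarith) hd'.le
    have ht0T : t0 < T := by
      rw [ht0, div_lt_iff₀ hd']
      have : T * (f y - f x) = -(T * (f x - f y)) := by ring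
      linarith
    have hmem := hf _ (mem_seg_of_lt hcv hx h1t0 ht0T)
    rw [map_add, map_smul, map_sub, smul_eq_mul] at hmem
    have heq : f x + t0 * (f y - f x) = c := by
      rw [ht0, div_mul_cancel₀ _ hd'.ne']
      ring
    linarith
  linarith

lemma funk_triangle (hbd : Bornology.IsBounded K) (hop : IsOpen K) (hcv : Convex ℝ K)
    {x y z : EuclideanSpace ℝ (Fin n)} (hx : x ∈ K) (hy : y ∈ K) (hz : z ∈ K)
    (hxy : x ≠ y) (hyz : y ≠ z) (hxz : x ≠ z) :
    Real.log (sSup {t : ℝ | x + t • (z - x) ∈ K} / (sSup {t : ℝ | x + t • (z - x) ∈ K} - 1))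
      ≤ Real.log (sSup {t : ℝ | x + t • (y - x) ∈ K} /
          (sSup {t : ℝ | x + t • (y - x) ∈ K} - 1))
        + Real.log (sSup {t : ℝ | y + t • (z - y) ∈ K} /
            (sSup {t : ℝ | y + t • (z - y) ∈ K} - 1)) := by
  set T1 := sSup {t : ℝ | x + t • (y - x) ∈ K} with hT1d
  set T2 := sSup {t : ℝ | y + t • (z - y) ∈ K} with hT2d
  set T3 := sSup {t : ℝ | x + t • (z - x) ∈ K} with hT3d
  have h1 : 1 < T1 := one_lt_sSup hbd hop hx hy hxy
  have h2 : 1 < T2 := one_lt_sSup hbd hop hy hz hyz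
  have h3 : 1 < T3 := one_lt_sSup hbd hop hx hz hxz
  obtain ⟨f, hf⟩ := geometric_hahn_banach_open_point hcv hop (sSup_notMem hbd hop hxz)
  set c := f (x + T3 • (z - x)) with hc
  have hgb : c = f x + T3 * (f z - f x) := by
    rw [hc, map_add, map_smul, map_sub, smul_eq_mul]
  have hgx : 0 < c - f x := by have := hf x hx; linarith
  have hgy : 0 < c - f y := by have := hf y hy; linarith
  have hgz : 0 < c - f z := by have := hf z hz; linarith
  have e1 : c - f x = T3 * (f z - f x) := by linarith [hgb]
  have e2 : c - f z = (T3 - 1) * (f z - f x) := by linear_combination hgb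
  have hkey : (c - f x) * (T3 - 1) = T3 * (c - f z) := by rw [e1, e2]; ring
  have b1 : (c - f x) * (T1 - 1) ≤ T1 * (c - f y) :=
    funk_bound hbd hop hcv hx hy hxy f c hf
  have b2 : (c - f y) * (T2 - 1) ≤ T2 * (c - f z) :=
    funk_bound hbd hop hcv hy hz hyz f c hf
  have main : T3 / (T3 - 1) ≤ (T1 / (T1 - 1)) * (T2 / (T2 - 1)) := by
    have e3 : T3 / (T3 - 1) = (c - f x) / (c - f z) := by
      rw [div_eq_div_iff (by linarith : (0:ℝ) < T3 - 1).ne' hgz.ne']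
      linarith [hkey]
    have r1 : (c - f x) / (c - f y) ≤ T1 / (T1 - 1) := by
      rw [div_le_div_iff₀ hgy (by linarith)]
      linarith [b1]
    have r2 : (c - f y) / (c - f z) ≤ T2 / (T2 - 1) := by
      rw [div_le_div_iff₀ hgz (by linarith)]
      linarith [b2]
    have e4 : (c - f x) / (c - f z) = ((c - f x)/(c - f y)) * ((c - f y)/(c - f z)) := by
      field_simp
    rw [e3, e4]
    exact mul_le_mul r1 r2 (div_nonneg hgy.le hgz.le) (div_nonneg (by linarith) (by linarith))
  calc Real.log (T3/(T3-1)) ≤ Real.log ((T1/(T1-1)) * (T2/(T2-1))) :=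
        Real.log_le_log (div_pos (by linarith) (by linarith)) main
  _ = _ := Real.log_mul (ne_of_gt (div_pos (by linarith) (by linarith)))
        (ne_of_gt (div_pos (by linarith) (by linarith)))

lemma sSup_swap (hbd : Bornology.IsBounded K) {x y : EuclideanSpace ℝ (Fin n)}
    (hx : x ∈ K) (hxy : x ≠ y) :
    sSup {s : ℝ | y + s • (x - y) ∈ K} = 1 - sInf {t : ℝ | x + t • (y - x) ∈ K} := by
  have hmem : ∀ s : ℝ, y + s • (x - y) = x + (1 - s) • (y - x) := fun s => by module
  have hIne : ({t : ℝ | x + t • (y - x) ∈ K}).Nonempty := ⟨0, mem_zero hx⟩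
  have hglb := isGLB_csInf hIne (bddBelow_seg hbd hxy)
  have hJne : ({s : ℝ | y + s • (x - y) ∈ K}).Nonempty := by
    refine ⟨1, ?_⟩
    show y + (1:ℝ) • (x - y) ∈ K
    rw [one_smul, show y + (x - y) = x by abel]
    exact hx
  refine IsLUB.csSup_eq ⟨?_, ?_⟩ hJne
  · intro s hs
    have hs' : (1 - s) ∈ {t : ℝ | x + t • (y - x) ∈ K} := by
      show x + (1 - s) • (y - x) ∈ K
      rw [← hmem s]; exact hs
    have := hglb.1 hs'
    linarith
  · intro u hu
    have hlow : (1 - u) ∈ lowerBounds {t : ℝ | x + t • (y - x) ∈ K} := by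
      intro t ht
      have hJ : (1 - t) ∈ {s : ℝ | y + s • (x - y) ∈ K} := by
        show y + (1 - t) • (x - y) ∈ K
        rw [hmem (1 - t), show (1 : ℝ) - (1 - t) = t by ring]
        exact ht
      have := hu hJ
      linarith
    have := hglb.2 hlow
    linarith

lemma hilbertDist_eq (hbd : Bornology.IsBounded K) (hop : IsOpen K) (hcv : Convex ℝ K)
    {x y : EuclideanSpace ℝ (Fin n)} (hx : x ∈ K) (hy : y ∈ K) (hxy : x ≠ y) :
    hilbertDist K x y = (1/2) *
      (Real.log (sSup {t : ℝ | x + t • (y - x) ∈ K} /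
          (sSup {t : ℝ | x + t • (y - x) ∈ K} - 1))
       + Real.log (sSup {s : ℝ | y + s • (x - y) ∈ K} /
          (sSup {s : ℝ | y + s • (x - y) ∈ K} - 1))) := by
  rw [hilbertDist, if_neg hxy]
  have hswap := sSup_swap hbd hx hxy
  set T := sSup {t : ℝ | x + t • (y - x) ∈ K} with hTd
  set T' := sSup {s : ℝ | y + s • (x - y) ∈ K} with hT'd
  set S := sInf {t : ℝ | x + t • (y - x) ∈ K} with hSd
  have hT : 1 < T := one_lt_sSup hbd hop hx hy hxy
  have hT' : 1 < T' := one_lt_sSup hbd hop hy hx (Ne.symm hxy)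
  have e1 : (1 - S) / (0 - S) = T' / (T' - 1) := by
    rw [hswap] at hT' ⊢
    rw [show (1:ℝ) - S - 1 = 0 - S by ring]
  rw [e1, Real.log_mul (ne_of_gt (div_pos (by linarith) (by linarith)))
      (ne_of_gt (div_pos (by linarith) (by linarith)))]
  ring

lemma hilbertDist_nonneg (hbd : Bornology.IsBounded K) (hop : IsOpen K) (hcv : Convex ℝ K)
    {x y : EuclideanSpace ℝ (Fin n)} (hx : x ∈ K) (hy : y ∈ K) :
    0 ≤ hilbertDist K x y := by
  by_cases h : x = y
  · simp [hilbertDist, h]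
  · rw [hilbertDist_eq hbd hop hcv hx hy h]
    have hT := one_lt_sSup hbd hop hx hy h
    have hT' := one_lt_sSup hbd hop hy hx (Ne.symm h)
    have l1 : 0 ≤ Real.log (sSup {t : ℝ | x + t • (y - x) ∈ K} /
        (sSup {t : ℝ | x + t • (y - x) ∈ K} - 1)) := by
      apply Real.log_nonneg
      rw [le_div_iff₀ (by linarith)]
      linarith
    have l2 : 0 ≤ Real.log (sSup {s : ℝ | y + s • (x - y) ∈ K} /
        (sSup {s : ℝ | y + s • (x - y) ∈ K} - 1)) := by
      apply Real.log_nonneg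
      rw [le_div_iff₀ (by linarith)]
      linarith
    linarith

end HilbertAux

/-- The Hilbert metric on a nonempty bounded open convex `K ⊆ ℝⁿ`
satisfies the triangle inequality. -/
theorem hilbertDist_triangle {n : ℕ} (K : Set (EuclideanSpace ℝ (Fin n)))
    (hne : K.Nonempty) (hbd : Bornology.IsBounded K) (hop : IsOpen K) (hcv : Convex ℝ K)
    (x y z : EuclideanSpace ℝ (Fin n)) (hx : x ∈ K) (hy : y ∈ K) (hz : z ∈ K) :
    hilbertDist K x z ≤ hilbertDist K x y + hilbertDist K y z := by
  by_cases hxy : x = y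
  · subst hxy
    rw [show hilbertDist K x x = 0 by simp [hilbertDist], zero_add]
  by_cases hyz : y = z
  · subst hyz
    rw [show hilbertDist K y y = 0 by simp [hilbertDist], add_zero]
  by_cases hxz : x = z
  · subst hxz
    rw [show hilbertDist K x x = 0 by simp [hilbertDist]]
    have n1 := HilbertAux.hilbertDist_nonneg hbd hop hcv hx hy
    have n2 := HilbertAux.hilbertDist_nonneg hbd hop hcv hy hx
    linarith
  · rw [HilbertAux.hilbertDist_eq hbd hop hcv hx hz hxz,
        HilbertAux.hilbertDist_eq hbd hop hcv hx hy hxy,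
        HilbertAux.hilbertDist_eq hbd hop hcv hy hz hyz]
    have t1 := HilbertAux.funk_triangle hbd hop hcv hx hy hz hxy hyz hxz
    have t2 := HilbertAux.funk_triangle hbd hop hcv hz hy hx
      (Ne.symm hyz) (Ne.symm hxy) (Ne.symm hxz)
    linarith
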